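/- Let τ_f, τ_s > 0 and G(s) = 1/(τ_f s + 1/(τ_s s + 1)). Then the phase condition Im G(jω) = 0 for ω > 0 has a solution if and only if τ_s > τ_f, in which case the unique positive solution is ω = (1/τ_s)·√((τ_s − τ_f)/τ_f). -/

import Mathlib

/-!
Multiplying through by `τ_s s + 1`, `G(jω) = N / D` with `N = 1 + j τ_s ω` and
`D = (1 - τ_f τ_s ω²) + j τ_f ω`, so `Im G(jω) = ω (τ_s - τ_f - τ_f τ_s² ω²) / |D|²`.
As `|D|² > 0`, a positive phase-crossing frequency is exactly a positive root of
`τ_f τ_s² ω² = τ_s - τ_f`, which exists iff `τ_s > τ_f` and is then the stated square root.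
-/

open Real

open Complex in
theorem im_one_div_add_one_div (a b ω : ℝ) :
    (1 / (a * (I * ω) + 1 / (b * (I * ω) + 1))).im =
      ω * (b - a - a * b ^ 2 * ω ^ 2) / ((1 - a * b * ω ^ 2) ^ 2 + (a * ω) ^ 2) := by
  have hN : b * (I * ω) + 1 = 1 + (b * ω : ℝ) * I := by push_cast; ring
  have hN0 : (1 + (b * ω : ℝ) * I : ℂ) ≠ 0 := fun h => by simpa using congrArg re h
  have hD : a * (I * ω) + 1 / (1 + (b * ω : ℝ) * I) =
      ((1 - a * b * ω ^ 2 : ℝ) + (a * ω : ℝ) * I) / (1 + (b * ω : ℝ) * I) := by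
    rw [eq_div_iff hN0, add_mul, one_div_mul_cancel hN0]
    push_cast
    linear_combination (a * b * ω ^ 2 : ℂ) * I_sq
  rw [hN, hD, one_div_div, div_im]
  simp only [normSq_add_mul_I, add_re, add_im, one_re, one_im, mul_re, mul_im, ofReal_re,
    ofReal_im, I_re, I_im]
  ring

theorem crossing_frequency_iff {τf τs ω : ℝ} (hτf : 0 < τf) (hω : 0 < ω) :
    τf * τs ^ 2 * ω ^ 2 = τs - τf ↔ τf < τs ∧ ω = 1 / τs * √((τs - τf) / τf) := by
  constructor
  · intro h
    have hτs : τs ≠ 0 := by rintro rfl; linarith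
    have hlt : τf < τs := by linarith [show 0 < τf * τs ^ 2 * ω ^ 2 by positivity]
    have hτs_pos : 0 < τs := hτf.trans hlt
    refine ⟨hlt, ?_⟩
    rw [one_div_mul_eq_div, eq_div_iff hτs, eq_comm,
      sqrt_eq_iff_mul_self_eq_of_pos (by positivity), eq_div_iff hτf.ne']
    linear_combination h
  · rintro ⟨hlt, rfl⟩
    have hτs : τs ≠ 0 := (hτf.trans hlt).ne'
    rw [mul_pow, sq_sqrt (div_nonneg (sub_nonneg.2 hlt.le) hτf.le)]
    field_simp

theorem relaxation_phase_crossing_general (τf τs : ℝ) (hτf : 0 < τf)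
    (G : ℝ → ℂ)
    (hG : ∀ ω : ℝ, G ω = 1 / (τf * (Complex.I * ω) + 1 / (τs * (Complex.I * ω) + 1))) :
    ((∃ ω : ℝ, 0 < ω ∧ (G ω).im = 0) ↔ τf < τs) ∧
    (∀ ω : ℝ, 0 < ω →
      ((G ω).im = 0 ↔ τf < τs ∧ ω = (1 / τs) * Real.sqrt ((τs - τf) / τf))) := by
  have crossing_iff : ∀ ω : ℝ, 0 < ω →
      ((G ω).im = 0 ↔ τf < τs ∧ ω = (1 / τs) * Real.sqrt ((τs - τf) / τf)) := by
    intro ω hω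
    have hden : 0 < (1 - τf * τs * ω ^ 2) ^ 2 + (τf * ω) ^ 2 := by positivity
    rw [hG, im_one_div_add_one_div, div_eq_zero_iff, or_iff_left hden.ne', mul_eq_zero,
      or_iff_right hω.ne', ← crossing_frequency_iff hτf hω, sub_sub, sub_eq_zero, eq_comm,
      eq_sub_iff_add_eq']
  refine ⟨⟨fun ⟨ω, hω, h⟩ => ((crossing_iff ω hω).1 h).1, fun hlt => ?_⟩, crossing_iff⟩
  have hτs : 0 < τs := hτf.trans hlt
  have hω : 0 < 1 / τs * √((τs - τf) / τf) :=
    mul_pos (by positivity) (sqrt_pos.2 (div_pos (sub_pos.2 hlt) hτf))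
  exact ⟨_, hω, (crossing_iff _ hω).2 ⟨hlt, rfl⟩⟩

theorem relaxation_phase_crossing (τf τs : ℝ) (hτf : 0 < τf) (hτs : 0 < τs)
    (G : ℝ → ℂ)
    (hG : ∀ ω : ℝ, G ω = 1 / (τf * (Complex.I * ω) + 1 / (τs * (Complex.I * ω) + 1))) :
    ((∃ ω : ℝ, 0 < ω ∧ (G ω).im = 0) ↔ τf < τs) ∧
    (∀ ω : ℝ, 0 < ω →
      ((G ω).im = 0 ↔ τf < τs ∧ ω = (1 / τs) * Real.sqrt ((τs - τf) / τf))) :=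
  relaxation_phase_crossing_general τf τs hτf G hG
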